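/- Let A, B be positive definite n×n complex matrices and X an n×n complex matrix such that the block matrix [[A, X], [X*, B]] is PPT. Let X = U|X| be a polar decomposition of X with U unitary. Then the 2n×2n block matrix [[U*(A # B)U, |X|], [|X|, A # B]] is positive semidefinite. -/

import Mathlib

open Matrix ComplexOrder
open scoped Classical

/-- The square root of a positive semidefinite matrix (removed from Mathlib; restored with
its former definition). -/
noncomputable def Matrix.PosSemidef.sqrt {n 𝕜 : Type*} [Fintype n] [DecidableEq n] [RCLike 𝕜]
    {A : Matrix n n 𝕜} (hA : A.PosSemidef) : Matrix n n 𝕜 :=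
  hA.1.eigenvectorUnitary.1 * diagonal ((↑) ∘ (√·) ∘ hA.1.eigenvalues) *
  (star hA.1.eigenvectorUnitary : Matrix n n 𝕜)

theorem Matrix.PosSemidef.posSemidef_sqrt {n 𝕜 : Type*} [Fintype n] [DecidableEq n] [RCLike 𝕜]
    {A : Matrix n n 𝕜} (hA : A.PosSemidef) : hA.sqrt.PosSemidef := by
  have hD : (diagonal ((↑) ∘ (√·) ∘ hA.1.eigenvalues : n → 𝕜)).PosSemidef := by
    rw [Matrix.posSemidef_diagonal_iff]
    intro i
    simp [Real.sqrt_nonneg]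
  exact hD.mul_mul_conjTranspose_same _

/-- The geometric mean `P # Q = P^{1/2} (P^{-1/2} Q P^{-1/2})^{1/2} P^{1/2}` of two
positive definite complex matrices (junk value `0` if `P` or `Q` is not positive definite). -/
noncomputable def geomMean {n : ℕ} (P Q : Matrix (Fin n) (Fin n) ℂ) :
    Matrix (Fin n) (Fin n) ℂ :=
  if h : P.PosDef ∧ Q.PosDef then
    have hs : ((h.1.posSemidef.sqrt⁻¹) * Q * (h.1.posSemidef.sqrt⁻¹)).PosSemidef := by
      have h1 := h.2.posSemidef.conjTranspose_mul_mul_same (h.1.posSemidef.sqrt⁻¹)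
      rwa [Matrix.conjTranspose_nonsing_inv, h.1.posSemidef.posSemidef_sqrt.1.eq] at h1
    h.1.posSemidef.sqrt * hs.sqrt * h.1.posSemidef.sqrt
  else 0

/-- The absolute value `|X| = (XᴴX)^{1/2}` of a complex matrix. -/
noncomputable def mAbs {n : ℕ} (X : Matrix (Fin n) (Fin n) ℂ) :
    Matrix (Fin n) (Fin n) ℂ :=
  (Matrix.posSemidef_conjTranspose_mul_self X).sqrt

theorem Matrix.PosSemidef.sqrt_mul_self {n 𝕜 : Type*} [Fintype n] [DecidableEq n] [RCLike 𝕜]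
    {A : Matrix n n 𝕜} (hA : A.PosSemidef) : hA.sqrt * hA.sqrt = A := by
  have hC : (star hA.1.eigenvectorUnitary : Matrix n n 𝕜) * hA.1.eigenvectorUnitary.1 = 1 :=
    Matrix.mem_unitaryGroup_iff'.mp hA.1.eigenvectorUnitary.2
  have hD : diagonal ((↑) ∘ (√·) ∘ hA.1.eigenvalues : n → 𝕜) *
      diagonal ((↑) ∘ (√·) ∘ hA.1.eigenvalues : n → 𝕜) =
      diagonal (RCLike.ofReal ∘ hA.1.eigenvalues) := by
    rw [diagonal_mul_diagonal]; congr 1; funext i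
    simp [← RCLike.ofReal_mul, Real.mul_self_sqrt (hA.eigenvalues_nonneg i)]
  have e1 : A = hA.1.eigenvectorUnitary.1 * diagonal (RCLike.ofReal ∘ hA.1.eigenvalues) *
      (star hA.1.eigenvectorUnitary : Matrix n n 𝕜) := hA.1.spectral_theorem
  unfold Matrix.PosSemidef.sqrt
  conv_rhs => rw [e1, ← hD]
  simp only [Matrix.mul_assoc]
  rw [← Matrix.mul_assoc (star hA.1.eigenvectorUnitary : Matrix n n 𝕜)
    (hA.1.eigenvectorUnitary.1), hC, Matrix.one_mul]

section Helpers

variable {n : ℕ}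

lemma posDef_of_isUnit {M : Matrix (Fin n) (Fin n) ℂ} (hM : M.PosSemidef) (h : IsUnit M) :
    M.PosDef := by
  refine Matrix.PosDef.of_dotProduct_mulVec_pos hM.1 fun x hx =>
    lt_of_le_of_ne (hM.dotProduct_mulVec_nonneg x) (Ne.symm fun h0 => hx ?_)
  have h1 : M *ᵥ x = 0 := (hM.dotProduct_mulVec_zero_iff x).mp h0
  have h2 : M⁻¹ *ᵥ (M *ᵥ x) = x := by
    rw [Matrix.mulVec_mulVec,
      Matrix.nonsing_inv_mul M ((Matrix.isUnit_iff_isUnit_det M).mp h), Matrix.one_mulVec]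
  rw [h1, Matrix.mulVec_zero] at h2
  exact h2.symm

lemma isUnit_conjT {M : Matrix (Fin n) (Fin n) ℂ} (h : IsUnit M) : IsUnit Mᴴ := by
  rw [Matrix.isUnit_iff_isUnit_det] at h ⊢
  rw [Matrix.det_conjTranspose]
  exact h.star

lemma posDef_conj {M C : Matrix (Fin n) (Fin n) ℂ} (hM : M.PosDef) (hC : IsUnit C) :
    (Cᴴ * M * C).PosDef :=
  posDef_of_isUnit (hM.posSemidef.conjTranspose_mul_mul_same C)
    (((isUnit_conjT hC).mul hM.isUnit).mul hC)

lemma posDef_sqrt {M : Matrix (Fin n) (Fin n) ℂ} (hM : M.PosDef) :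
    hM.posSemidef.sqrt.PosDef := by
  refine posDef_of_isUnit hM.posSemidef.posSemidef_sqrt ?_
  rw [Matrix.isUnit_iff_isUnit_det, isUnit_iff_ne_zero]
  intro h0
  have hdet : hM.posSemidef.sqrt.det * hM.posSemidef.sqrt.det = M.det := by
    rw [← Matrix.det_mul, hM.posSemidef.sqrt_mul_self]
  rw [h0, mul_zero] at hdet
  exact hM.det_pos.ne' hdet.symm

lemma geomMean_posDef {A B : Matrix (Fin n) (Fin n) ℂ} (hA : A.PosDef) (hB : B.PosDef) :
    (geomMean A B).PosDef ∧ geomMean A B * A⁻¹ * geomMean A B = B := by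
  have hsA : hA.posSemidef.sqrt.PosDef := posDef_sqrt hA
  set sA := hA.posSemidef.sqrt with hsAdef
  have hsAh : sAᴴ = sA := hsA.1
  have hsAdet : IsUnit sA.det := (Matrix.isUnit_iff_isUnit_det sA).mp hsA.isUnit
  have hsAinvH : (sA⁻¹)ᴴ = sA⁻¹ := by rw [Matrix.conjTranspose_nonsing_inv, hsAh]
  have hsAinvU : IsUnit sA⁻¹ := Matrix.isUnit_nonsing_inv_iff.mpr hsA.isUnit
  have hAeq : sA * sA = A := hA.posSemidef.sqrt_mul_self
  have hS : (sA⁻¹ * B * sA⁻¹).PosSemidef := by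
    have h1 := hB.posSemidef.conjTranspose_mul_mul_same (sA⁻¹)
    rwa [hsAinvH] at h1
  have hSpd : (sA⁻¹ * B * sA⁻¹).PosDef := by
    have h1 := posDef_conj hB hsAinvU
    rwa [hsAinvH] at h1
  have hGdef : geomMean A B = sA * hS.sqrt * sA := by
    unfold geomMean
    rw [dif_pos ⟨hA, hB⟩]
  have ht : hS.sqrt.PosDef := posDef_sqrt hSpd
  have htt : hS.sqrt * hS.sqrt = sA⁻¹ * B * sA⁻¹ := hS.sqrt_mul_self
  have csa1 : ∀ Z : Matrix (Fin n) (Fin n) ℂ, sA * (sA⁻¹ * Z) = Z :=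
    fun Z => Matrix.mul_nonsing_inv_cancel_left sA Z hsAdet
  have csa2 : ∀ Z : Matrix (Fin n) (Fin n) ℂ, sA⁻¹ * (sA * Z) = Z :=
    fun Z => Matrix.nonsing_inv_mul_cancel_left sA Z hsAdet
  constructor
  · rw [hGdef]
    have h2 := posDef_conj ht hsA.isUnit
    rwa [hsAh] at h2
  · have hAinv1 : A⁻¹ = sA⁻¹ * sA⁻¹ := by rw [← hAeq, Matrix.mul_inv_rev]
    have htt' : ∀ Z : Matrix (Fin n) (Fin n) ℂ,
        hS.sqrt * (hS.sqrt * Z) = sA⁻¹ * (B * (sA⁻¹ * Z)) := by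
      intro Z
      rw [← Matrix.mul_assoc, htt]
      simp only [Matrix.mul_assoc]
    rw [hGdef, hAinv1]
    simp only [Matrix.mul_assoc, csa1, csa2, htt']
    rw [Matrix.nonsing_inv_mul sA hsAdet, Matrix.mul_one]



lemma herm_le_one {M : Matrix (Fin n) (Fin n) ℂ} (hM : M.IsHermitian)
    (h : ∀ i, hM.eigenvalues i ≤ 1) : (1 - M).PosSemidef := by
  have hV : (hM.eigenvectorUnitary : Matrix (Fin n) (Fin n) ℂ) *
      (star hM.eigenvectorUnitary : Matrix (Fin n) (Fin n) ℂ) = 1 :=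
    (Matrix.mem_unitaryGroup_iff).mp hM.eigenvectorUnitary.2
  have e1 : M = (hM.eigenvectorUnitary : Matrix (Fin n) (Fin n) ℂ) *
      diagonal (RCLike.ofReal ∘ hM.eigenvalues) *
      (star hM.eigenvectorUnitary : Matrix (Fin n) (Fin n) ℂ) := hM.spectral_theorem
  have key : 1 - M = (hM.eigenvectorUnitary : Matrix (Fin n) (Fin n) ℂ) *
      (1 - diagonal (RCLike.ofReal ∘ hM.eigenvalues)) *
      (star hM.eigenvectorUnitary : Matrix (Fin n) (Fin n) ℂ) := by
    rw [Matrix.mul_sub, Matrix.sub_mul, Matrix.mul_one, hV, ← e1]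
  rw [key]
  have hd : (1 - diagonal (RCLike.ofReal ∘ hM.eigenvalues) :
      Matrix (Fin n) (Fin n) ℂ).PosSemidef := by
    rw [← Matrix.diagonal_one, Matrix.diagonal_sub]
    refine Matrix.posSemidef_diagonal_iff.mpr fun i => ?_
    simp only [Pi.sub_apply, Pi.one_apply, Function.comp_apply]
    have : (0:ℂ) ≤ ((1 - hM.eigenvalues i : ℝ) : ℂ) := by
      exact_mod_cast sub_nonneg.mpr (h i)
    simpa using this
  simpa [Matrix.star_eq_conjTranspose] using hd.mul_mul_conjTranspose_same (hM.eigenvectorUnitary : Matrix (Fin n) (Fin n) ℂ)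


noncomputable def ee : (Fin n → ℂ) ≃ EuclideanSpace ℂ (Fin n) := (WithLp.equiv 2 (Fin n → ℂ)).symm

lemma ee_inner (x y : Fin n → ℂ) : (inner ℂ (ee x) (ee y) : ℂ) = star x ⬝ᵥ y :=
  (EuclideanSpace.inner_toLp_toLp x y).trans (dotProduct_comm _ _)

lemma ee_norm_sq (x : Fin n → ℂ) : (‖ee x‖ : ℝ) ^ 2 = Complex.re (star x ⬝ᵥ x) := by
  rw [← ee_inner]; exact (inner_self_eq_norm_sq (𝕜 := ℂ) (ee x)).symm

lemma contraction_bound {K : Matrix (Fin n) (Fin n) ℂ} (hK : ((1 : Matrix (Fin n) (Fin n) ℂ) - Kᴴ * K).PosSemidef)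
    (w : Fin n → ℂ) : ‖ee (K *ᵥ w)‖ ≤ ‖ee w‖ := by
  have h0 : (0:ℂ) ≤ star w ⬝ᵥ (((1 : Matrix (Fin n) (Fin n) ℂ) - Kᴴ * K) *ᵥ w) := hK.dotProduct_mulVec_nonneg w
  rw [Matrix.sub_mulVec, Matrix.one_mulVec, dotProduct_sub, sub_nonneg] at h0
  have e1 : star w ⬝ᵥ ((Kᴴ * K) *ᵥ w) = star (K *ᵥ w) ⬝ᵥ (K *ᵥ w) := by
    rw [← Matrix.mulVec_mulVec, Matrix.dotProduct_mulVec, ← Matrix.star_mulVec]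
  have h2 : Complex.re (star (K *ᵥ w) ⬝ᵥ (K *ᵥ w)) ≤ Complex.re (star w ⬝ᵥ w) := by
    rw [← e1]; exact (Complex.le_def.mp h0).1
  have := ee_norm_sq (K *ᵥ w)
  have h3 : ‖ee (K *ᵥ w)‖ ^ 2 ≤ ‖ee w‖ ^ 2 := by
    rw [ee_norm_sq, ee_norm_sq]; exact h2
  exact (pow_le_pow_iff_left₀ (norm_nonneg _) (norm_nonneg _) two_ne_zero).mp h3

lemma key_bound {M K L P : Matrix (Fin n) (Fin n) ℂ}
    (hM : M.IsHermitian) (hP : IsUnit P)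
    (hPM : P * M * P⁻¹ = (L * K)ᴴ)
    (hK : ((1 : Matrix (Fin n) (Fin n) ℂ) - Kᴴ * K).PosSemidef)
    (hL : ((1 : Matrix (Fin n) (Fin n) ℂ) - Lᴴ * L).PosSemidef) :
    ((1 : Matrix (Fin n) (Fin n) ℂ) - M).PosSemidef := by
  have hPdet := (Matrix.isUnit_iff_isUnit_det P).mp hP
  apply herm_le_one hM
  intro i
  set μ := hM.eigenvalues i with hμ
  set v : Fin n → ℂ := ⇑(hM.eigenvectorBasis i) with hvdef
  have hv : M *ᵥ v = μ • v := hM.mulVec_eigenvectorBasis i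
  have hvne : v ≠ 0 := by
    intro h
    exact hM.eigenvectorBasis.orthonormal.ne_zero i ((WithLp.ofLp_eq_zero 2).mp h)
  set w : Fin n → ℂ := P *ᵥ v with hwdef
  have hwne : w ≠ 0 := by
    intro h
    apply hvne
    have : P⁻¹ *ᵥ w = v := by
      rw [hwdef, Matrix.mulVec_mulVec, Matrix.nonsing_inv_mul P hPdet, Matrix.one_mulVec]
    rw [h, Matrix.mulVec_zero] at this
    exact this.symm
  have hMw : (L * K)ᴴ *ᵥ w = μ • w := by
    rw [← hPM, hwdef, Matrix.mulVec_mulVec, Matrix.mul_assoc (P * M),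
      Matrix.nonsing_inv_mul P hPdet, Matrix.mul_one, ← Matrix.mulVec_mulVec, hv,
      Matrix.mulVec_smul]
  set r : ℂ := star w ⬝ᵥ w with hrdef
  have hr0 : 0 < r := lt_of_le_of_ne (dotProduct_star_self_nonneg w)
    (Ne.symm fun h => hwne (dotProduct_star_self_eq_zero.mp h))
  have hrre : 0 < r.re := (Complex.lt_def.mp hr0).1
  have hmain : star w ⬝ᵥ ((L * K)ᴴ *ᵥ w) = star ((L * K) *ᵥ w) ⬝ᵥ w := by
    rw [Matrix.dotProduct_mulVec, ← Matrix.star_mulVec]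
  have heq : star (L *ᵥ (K *ᵥ w)) ⬝ᵥ w = μ • r := by
    rw [Matrix.mulVec_mulVec, ← hmain, hMw, dotProduct_smul, hrdef]
  have hre : μ * r.re = Complex.re ((inner ℂ (ee (L *ᵥ (K *ᵥ w))) (ee w) : ℂ)) := by
    rw [ee_inner, heq, Complex.real_smul]; simp [Complex.mul_re]
  have hbound : Complex.re ((inner ℂ (ee (L *ᵥ (K *ᵥ w))) (ee w) : ℂ)) ≤ r.re := by
    calc Complex.re ((inner ℂ (ee (L *ᵥ (K *ᵥ w))) (ee w) : ℂ))
        ≤ ‖(inner ℂ (ee (L *ᵥ (K *ᵥ w))) (ee w) : ℂ)‖ := by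
          exact Complex.re_le_norm _
      _ ≤ ‖ee (L *ᵥ (K *ᵥ w))‖ * ‖ee w‖ := norm_inner_le_norm _ _
      _ ≤ ‖ee w‖ * ‖ee w‖ := by
          apply mul_le_mul_of_nonneg_right _ (norm_nonneg _)
          exact le_trans (contraction_bound hL _) (contraction_bound hK w)
      _ = r.re := by
          have h5 := inner_self_eq_norm_mul_norm (𝕜 := ℂ) (ee w)
          rw [ee_inner] at h5
          exact h5.symm
  nlinarith [hre ▸ hbound]

end Helpers

theorem stmt9 {n : ℕ} (A B X U : Matrix (Fin n) (Fin n) ℂ)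
    (hA : A.PosDef) (hB : B.PosDef)
    (hH : (Matrix.fromBlocks A X Xᴴ B).PosSemidef)
    (hτ : (Matrix.fromBlocks A Xᴴ X B).PosSemidef)
    (hU : U ∈ Matrix.unitaryGroup (Fin n) ℂ)
    (hpolar : X = U * mAbs X) :
    (Matrix.fromBlocks (Uᴴ * geomMean A B * U) (mAbs X) (mAbs X) (geomMean A B)).PosSemidef := by
  classical
  obtain ⟨hGpd, hGAG⟩ := geomMean_posDef hA hB
  have hAdet : IsUnit A.det := (Matrix.isUnit_iff_isUnit_det A).mp hA.isUnit
  have hGdet : IsUnit (geomMean A B).det :=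
    (Matrix.isUnit_iff_isUnit_det _).mp hGpd.isUnit
  haveI : Invertible A := A.invertibleOfIsUnitDet hAdet
  haveI : Invertible (geomMean A B) := (geomMean A B).invertibleOfIsUnitDet hGdet
  -- Schur complements of the hypotheses
  have schur1 : (B - Xᴴ * A⁻¹ * X).PosSemidef := (Matrix.PosDef.fromBlocks₁₁ X B hA).mp hH
  have schur2 : (B - X * A⁻¹ * Xᴴ).PosSemidef := by
    have hτ2 : (Matrix.fromBlocks A Xᴴ (Xᴴ)ᴴ B).PosSemidef := by
      rwa [Matrix.conjTranspose_conjTranspose]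
    have := (Matrix.PosDef.fromBlocks₁₁ Xᴴ B hA).mp hτ2
    rwa [Matrix.conjTranspose_conjTranspose] at this
  -- square root of G
  have hrG : hGpd.posSemidef.sqrt.PosDef := posDef_sqrt hGpd
  set rG := hGpd.posSemidef.sqrt with hrGdef
  have hrGh : rGᴴ = rG := hrG.1
  have hrGdet : IsUnit rG.det := (Matrix.isUnit_iff_isUnit_det rG).mp hrG.isUnit
  have hrGinvH : (rG⁻¹)ᴴ = rG⁻¹ := by rw [Matrix.conjTranspose_nonsing_inv, hrGh]
  have hrGinvU : IsUnit rG⁻¹ := Matrix.isUnit_nonsing_inv_iff.mpr hrG.isUnit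
  have hGeq : rG * rG = geomMean A B := hGpd.posSemidef.sqrt_mul_self
  have cg1 : ∀ Z : Matrix (Fin n) (Fin n) ℂ, rG * (rG⁻¹ * Z) = Z :=
    fun Z => Matrix.mul_nonsing_inv_cancel_left rG Z hrGdet
  have cg2 : ∀ Z : Matrix (Fin n) (Fin n) ℂ, rG⁻¹ * (rG * Z) = Z :=
    fun Z => Matrix.nonsing_inv_mul_cancel_left rG Z hrGdet
  have cg3 : rG⁻¹ * rG = 1 := Matrix.nonsing_inv_mul rG hrGdet
  have cg4 : rG * rG⁻¹ = 1 := Matrix.mul_nonsing_inv rG hrGdet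
  -- A₁ and its square root P
  have hA₁pd : (rG⁻¹ * A * rG⁻¹).PosDef := by
    have h1 := posDef_conj hA hrGinvU
    rwa [hrGinvH] at h1
  have hP : hA₁pd.posSemidef.sqrt.PosDef := posDef_sqrt hA₁pd
  set P := hA₁pd.posSemidef.sqrt with hPdef
  have hPh : Pᴴ = P := hP.1
  have hPdet : IsUnit P.det := (Matrix.isUnit_iff_isUnit_det P).mp hP.isUnit
  have hPinvH : (P⁻¹)ᴴ = P⁻¹ := by rw [Matrix.conjTranspose_nonsing_inv, hPh]
  have hPeq : P * P = rG⁻¹ * A * rG⁻¹ := hA₁pd.posSemidef.sqrt_mul_self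
  have cp1 : ∀ Z : Matrix (Fin n) (Fin n) ℂ, P * (P⁻¹ * Z) = Z :=
    fun Z => Matrix.mul_nonsing_inv_cancel_left P Z hPdet
  have cp2 : ∀ Z : Matrix (Fin n) (Fin n) ℂ, P⁻¹ * (P * Z) = Z :=
    fun Z => Matrix.nonsing_inv_mul_cancel_left P Z hPdet
  have cp3 : P⁻¹ * P = 1 := Matrix.nonsing_inv_mul P hPdet
  have cp4 : P * P⁻¹ = 1 := Matrix.mul_nonsing_inv P hPdet
  -- expressions for A, A⁻¹, B, G⁻¹
  have hAeq2 : A = rG * (P * (P * rG)) := by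
    have h1 := congrArg (fun M : Matrix (Fin n) (Fin n) ℂ => rG * M * rG) hPeq
    simp only [Matrix.mul_assoc, cg1, cg2, cg3, cg4, Matrix.mul_one, Matrix.one_mul] at h1
    exact h1.symm
  have hAinv2 : A⁻¹ = rG⁻¹ * (P⁻¹ * (P⁻¹ * rG⁻¹)) := by
    conv_lhs => rw [hAeq2]
    simp only [Matrix.mul_inv_rev, Matrix.mul_assoc]
  have hBeq : B = rG * (P⁻¹ * (P⁻¹ * rG)) := by
    rw [← hGAG, ← hGeq, hAinv2]
    simp only [Matrix.mul_assoc, cg1, cg2, cp1, cp2, cg3, cg4, cp3, cp4, Matrix.mul_one]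
  have hGinv : (geomMean A B)⁻¹ = rG⁻¹ * rG⁻¹ := by
    rw [← hGeq, Matrix.mul_inv_rev]
  -- the contractions
  have hKb : ((1 : Matrix (Fin n) (Fin n) ℂ) -
      (P⁻¹ * ((rG⁻¹ * (X * rG⁻¹))) * P)ᴴ * (P⁻¹ * ((rG⁻¹ * (X * rG⁻¹))) * P)).PosSemidef := by
    have c1 := schur1.conjTranspose_mul_mul_same (rG⁻¹)
    rw [hrGinvH] at c1
    have c2 := c1.conjTranspose_mul_mul_same P
    rw [hPh] at c2
    have e : P * ((rG⁻¹ * (B - Xᴴ * A⁻¹ * X) * rG⁻¹)) * P =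
        (1 : Matrix (Fin n) (Fin n) ℂ) -
        (P⁻¹ * ((rG⁻¹ * (X * rG⁻¹))) * P)ᴴ * (P⁻¹ * ((rG⁻¹ * (X * rG⁻¹))) * P) := by
      rw [hAinv2, hBeq]
      simp only [Matrix.conjTranspose_mul, hPh, hPinvH, hrGinvH, Matrix.conjTranspose_conjTranspose,
        Matrix.mul_sub, Matrix.sub_mul, Matrix.mul_assoc, cg1, cg2, cp1, cp2, cg3, cg4, cp3, cp4,
        Matrix.mul_one, Matrix.one_mul]
    rwa [e] at c2
  have hLb : ((1 : Matrix (Fin n) (Fin n) ℂ) -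
      (P⁻¹ * ((rG⁻¹ * (Xᴴ * rG⁻¹))) * P)ᴴ * (P⁻¹ * ((rG⁻¹ * (Xᴴ * rG⁻¹))) * P)).PosSemidef := by
    have c1 := schur2.conjTranspose_mul_mul_same (rG⁻¹)
    rw [hrGinvH] at c1
    have c2 := c1.conjTranspose_mul_mul_same P
    rw [hPh] at c2
    have e : P * ((rG⁻¹ * (B - X * A⁻¹ * Xᴴ) * rG⁻¹)) * P =
        (1 : Matrix (Fin n) (Fin n) ℂ) -
        (P⁻¹ * ((rG⁻¹ * (Xᴴ * rG⁻¹))) * P)ᴴ * (P⁻¹ * ((rG⁻¹ * (Xᴴ * rG⁻¹))) * P) := by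
      rw [hAinv2, hBeq]
      simp only [Matrix.conjTranspose_mul, hPh, hPinvH, hrGinvH, Matrix.conjTranspose_conjTranspose,
        Matrix.mul_sub, Matrix.sub_mul, Matrix.mul_assoc, cg1, cg2, cp1, cp2, cg3, cg4, cp3, cp4,
        Matrix.mul_one, Matrix.one_mul]
    rwa [e] at c2
  -- key bound
  have hMherm : ((rG⁻¹ * (X * rG⁻¹))ᴴ * (rG⁻¹ * (X * rG⁻¹))).IsHermitian :=
    (Matrix.posSemidef_conjTranspose_mul_self _).1
  have hPM : P * ((rG⁻¹ * (X * rG⁻¹))ᴴ * (rG⁻¹ * (X * rG⁻¹))) * P⁻¹ =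
      ((P⁻¹ * ((rG⁻¹ * (Xᴴ * rG⁻¹))) * P) * (P⁻¹ * ((rG⁻¹ * (X * rG⁻¹))) * P))ᴴ := by
    simp only [Matrix.conjTranspose_mul, hPh, hPinvH, hrGinvH, Matrix.conjTranspose_conjTranspose,
      Matrix.mul_assoc, cg1, cg2, cp1, cp2, cg3, cg4, cp3, cp4, Matrix.mul_one, Matrix.one_mul]
  have hone : ((1 : Matrix (Fin n) (Fin n) ℂ) -
      (rG⁻¹ * (X * rG⁻¹))ᴴ * (rG⁻¹ * (X * rG⁻¹))).PosSemidef :=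
    key_bound hMherm hP.isUnit hPM hKb hLb
  -- Schur for the goal block matrix
  have hfb : (Matrix.fromBlocks (geomMean A B) X Xᴴ (geomMean A B)).PosSemidef := by
    rw [Matrix.PosDef.fromBlocks₁₁ X (geomMean A B) hGpd]
    have c2 := hone.conjTranspose_mul_mul_same rG
    rw [hrGh] at c2
    have e : rG * ((1 : Matrix (Fin n) (Fin n) ℂ) -
        (rG⁻¹ * (X * rG⁻¹))ᴴ * (rG⁻¹ * (X * rG⁻¹))) * rG =
        geomMean A B - Xᴴ * (geomMean A B)⁻¹ * X := by
      rw [hGinv, ← hGeq]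
      simp only [Matrix.conjTranspose_mul, hrGinvH, Matrix.conjTranspose_conjTranspose,
        Matrix.mul_sub, Matrix.sub_mul, Matrix.mul_assoc, cg1, cg2, cg3, cg4,
        Matrix.mul_one, Matrix.one_mul]
    rwa [e] at c2
  -- polar decomposition manipulation
  have hUU : Uᴴ * U = 1 := by
    have := Matrix.mem_unitaryGroup_iff'.mp hU
    rwa [Matrix.star_eq_conjTranspose] at this
  have habsH : (mAbs X)ᴴ = mAbs X := (Matrix.posSemidef_conjTranspose_mul_self X).posSemidef_sqrt.1
  have habs : Uᴴ * X = mAbs X := by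
    conv_lhs => rw [hpolar]
    rw [← Matrix.mul_assoc, hUU, Matrix.one_mul]
  have habs2 : Xᴴ * U = mAbs X := by
    have : (Uᴴ * X)ᴴ = Xᴴ * U := by
      rw [Matrix.conjTranspose_mul, Matrix.conjTranspose_conjTranspose]
    rw [← this, habs, habsH]
  -- assemble
  have hfinal := hfb.conjTranspose_mul_mul_same (Matrix.fromBlocks U (0 : Matrix (Fin n) (Fin n) ℂ) (0 : Matrix (Fin n) (Fin n) ℂ) (1 : Matrix (Fin n) (Fin n) ℂ))
  have e2 : (Matrix.fromBlocks U (0 : Matrix (Fin n) (Fin n) ℂ) (0 : Matrix (Fin n) (Fin n) ℂ) (1 : Matrix (Fin n) (Fin n) ℂ))ᴴ *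
      (Matrix.fromBlocks (geomMean A B) X Xᴴ (geomMean A B)) * (Matrix.fromBlocks U (0 : Matrix (Fin n) (Fin n) ℂ) (0 : Matrix (Fin n) (Fin n) ℂ) (1 : Matrix (Fin n) (Fin n) ℂ)) =
      Matrix.fromBlocks (Uᴴ * geomMean A B * U) (mAbs X) (mAbs X) (geomMean A B) := by
    rw [Matrix.fromBlocks_conjTranspose, Matrix.fromBlocks_multiply, Matrix.fromBlocks_multiply]
    simp only [Matrix.conjTranspose_zero, Matrix.conjTranspose_one, Matrix.mul_zero,
      Matrix.zero_mul, Matrix.mul_one, Matrix.one_mul, add_zero, zero_add]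

    rw [habs, habs2]
  rwa [e2] at hfinal
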